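/- arXiv:2109.11967 — 2 statements merged into one kernel-verified Lean document; each statement's English description precedes it below -/
import Mathlib

section
/- The final coalgebra for the deterministic automaton functor T(X) = 2 × X^A is carried by the set 2^{A*} of languages over A, with structure map sending a language L to the pair (ε?(L), a ↦ a⁻¹L), where ε?(L) = 1 iff the empty word is in L and a⁻¹L = {w | aw ∈ L}. That is, for every coalgebra (V, ⟨o, d⟩ : V → 2 × V^A) there is a unique function !_V : V → 2^{A*} such that for all v ∈ V: ε ∈ !_V(v) ↔ o(v) = 1, and for all a ∈ A, w ∈ A*: aw ∈ !_V(v) ↔ w ∈ !_V(d(v)(a)). -/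
def dstar {V A : Type*} (d : V → A → V) : V → List A → V
  | v, [] => v
  | v, a :: w => dstar d (d v a) w

def lang {V A : Type*} (o : V → Bool) (d : V → A → V) (v : V) : Set (List A) :=
  {w | o (dstar d v w) = true}

section LanguageMorphism

variable {A V : Type*} (o : V → Bool) (d : V → A → V)

/-- `f` is a coalgebra homomorphism from `(V, o, d)` to the coalgebra of languages, whose
structure map is `L ↦ ([] ∈ L, fun a => {w | a :: w ∈ L})`. -/
def IsLanguageMorphism (f : V → Set (List A)) : Prop :=
  ∀ v : V, (([] : List A) ∈ f v ↔ o v = true) ∧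
    ∀ (a : A) (w : List A), (a :: w ∈ f v ↔ w ∈ f (d v a))

theorem nil_mem_lang (v : V) : ([] : List A) ∈ lang o d v ↔ o v = true := Iff.rfl

theorem cons_mem_lang (v : V) (a : A) (w : List A) :
    a :: w ∈ lang o d v ↔ w ∈ lang o d (d v a) := Iff.rfl

theorem isLanguageMorphism_lang : IsLanguageMorphism o d (lang o d) :=
  fun v => ⟨nil_mem_lang o d v, cons_mem_lang o d v⟩

variable {o d}

theorem IsLanguageMorphism.mem_iff_mem_lang {f : V → Set (List A)}
    (hf : IsLanguageMorphism o d f) (w : List A) (v : V) : w ∈ f v ↔ w ∈ lang o d v := by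
  induction w generalizing v with
  | nil => rw [(hf v).1, nil_mem_lang]
  | cons a w ih => rw [(hf v).2, ih, cons_mem_lang]

theorem IsLanguageMorphism.eq_lang {f : V → Set (List A)} (hf : IsLanguageMorphism o d f) :
    f = lang o d :=
  funext fun v => Set.ext fun w => hf.mem_iff_mem_lang w v

end LanguageMorphism

theorem final_coalgebra_languages {A V : Type*} (o : V → Bool) (d : V → A → V) :
    ∃! f : V → Set (List A),
      ∀ v : V, (([] : List A) ∈ f v ↔ o v = true) ∧
        ∀ (a : A) (w : List A), (a :: w ∈ f v ↔ w ∈ f (d v a)) :=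
  ⟨lang o d, isLanguageMorphism_lang o d, fun _ hf => IsLanguageMorphism.eq_lang hf⟩
end

section
/- A state of a deterministic automaton over a finite alphabet accepts a regular language if and only if it is bisimilar to a state of a finite automaton. Concretely: for (V,o,d) with A finite and v ∈ V, the language L_V(v) has finitely many distinct Brzozowski word derivatives (i.e., {w⁻¹L_V(v) | w ∈ List A} is finite) if and only if there is a finite automaton (V',o',d'), a state v', and a bisimulation R between V and V' with (v,v') ∈ R. -/
def isBisim {A V₁ V₂ : Type*} (o₁ : V₁ → Bool) (d₁ : V₁ → A → V₁)
    (o₂ : V₂ → Bool) (d₂ : V₂ → A → V₂) (R : V₁ → V₂ → Prop) : Prop :=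
  ∀ x y, R x y → o₁ x = o₂ y ∧ ∀ a : A, R (d₁ x a) (d₂ y a)

/-!
Bisimilar states accept the same language, and conversely language equivalence is itself a
bisimulation, so a state is bisimilar to a state of a finite automaton exactly when its language
is accepted by a finite DFA. By Myhill–Nerode, this means the language has finitely many left
quotients, which are its word derivatives.
-/

section Automaton

variable {A V : Type*}

theorem dstar_eq_evalFrom (M : DFA A V) (s : V) (w : List A) :
    dstar M.step s w = M.evalFrom s w := by
  induction w generalizing s with
  | nil => rfl
  | cons a w ih => exact ih (M.step s a)

theorem lang_step_eq_acceptsFrom {o : V → Bool} (M : DFA A V)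
    (ho : ∀ t, o t = true ↔ t ∈ M.accept) (s : V) : lang o M.step s = M.acceptsFrom s := by
  ext w
  show o (dstar M.step s w) = true ↔ M.evalFrom s w ∈ M.accept
  rw [dstar_eq_evalFrom, ho]

theorem nil_mem_lang_iff (o : V → Bool) (d : V → A → V) (x : V) :
    [] ∈ lang o d x ↔ o x = true :=
  Iff.rfl

theorem cons_mem_lang_iff (o : V → Bool) (d : V → A → V) (x : V) (a : A) (w : List A) :
    a :: w ∈ lang o d x ↔ w ∈ lang o d (d x a) :=
  Iff.rfl

theorem isRegular_lang [Finite V] (o : V → Bool) (d : V → A → V) (v : V) :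
    Language.IsRegular (lang o d v) :=
  Language.isRegular_iff.mpr ⟨V, Fintype.ofFinite V, ⟨d, v, {x | o x = true}⟩,
    (lang_step_eq_acceptsFrom _ (fun _ => Iff.rfl) v).symm⟩

theorem exists_finite_lang_eq_of_isRegular {L : Language A} (hL : L.IsRegular) :
    ∃ (V : Type) (_ : Finite V) (o : V → Bool) (d : V → A → V) (v : V), lang o d v = L := by
  classical
  obtain ⟨σ, _, M, rfl⟩ := hL
  exact ⟨σ, inferInstance, fun t => decide (t ∈ M.accept), M.step, M.start,
    lang_step_eq_acceptsFrom M (fun _ => decide_eq_true_iff) M.start⟩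

end Automaton

section Bisimulation

variable {A V₁ V₂ : Type*} {o₁ : V₁ → Bool} {d₁ : V₁ → A → V₁} {o₂ : V₂ → Bool}
  {d₂ : V₂ → A → V₂} {R : V₁ → V₂ → Prop}

theorem isBisim.rel_dstar (hR : isBisim o₁ d₁ o₂ d₂ R) {x : V₁} {y : V₂} (hxy : R x y)
    (w : List A) : R (dstar d₁ x w) (dstar d₂ y w) := by
  induction w generalizing x y with
  | nil => exact hxy
  | cons a w ih => exact ih ((hR x y hxy).2 a)

theorem isBisim.lang_eq (hR : isBisim o₁ d₁ o₂ d₂ R) {x : V₁} {y : V₂} (hxy : R x y) :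
    lang o₁ d₁ x = lang o₂ d₂ y := by
  ext w
  show o₁ (dstar d₁ x w) = true ↔ o₂ (dstar d₂ y w) = true
  rw [(hR _ _ (hR.rel_dstar hxy w)).1]

variable (o₁ d₁ o₂ d₂) in
theorem isBisim_lang_eq : isBisim o₁ d₁ o₂ d₂ fun x y => lang o₁ d₁ x = lang o₂ d₂ y := by
  intro x y hxy
  refine ⟨?_, fun a => ?_⟩
  · rw [Bool.eq_iff_iff, ← nil_mem_lang_iff o₁ d₁, ← nil_mem_lang_iff o₂ d₂, hxy]
  · ext w
    rw [← cons_mem_lang_iff, ← cons_mem_lang_iff, hxy]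

end Bisimulation

theorem regular_iff_bisimilar_to_finite_general {A : Type} {V : Type}
    (o : V → Bool) (d : V → A → V) (v : V) :
    ({L : Set (List A) | ∃ w : List A, L = {u | w ++ u ∈ lang o d v}}).Finite ↔
      ∃ (V' : Type) (_ : Finite V') (o' : V' → Bool) (d' : V' → A → V') (v' : V')
        (R : V → V' → Prop), isBisim o d o' d' R ∧ R v v' := by
  have finite_iff_isRegular :
      ({L : Set (List A) | ∃ w : List A, L = {u | w ++ u ∈ lang o d v}}).Finite ↔
        Language.IsRegular (lang o d v) :=
    .symm <| Language.isRegular_iff_finite_range_leftQuotient.trans <|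
      iff_of_eq <| congrArg _ <| Set.ext fun _ => exists_congr fun _ => eq_comm
  rw [finite_iff_isRegular]
  constructor
  · intro hreg
    obtain ⟨V', _, o', d', v', hv'⟩ := exists_finite_lang_eq_of_isRegular hreg
    exact ⟨V', inferInstance, o', d', v', _, isBisim_lang_eq o d o' d', hv'.symm⟩
  · rintro ⟨V', _, o', d', v', R, hR, hvv'⟩
    rw [hR.lang_eq hvv']
    exact isRegular_lang o' d' v'

theorem regular_iff_bisimilar_to_finite {A : Type} [Finite A] {V : Type}
    (o : V → Bool) (d : V → A → V) (v : V) :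
    ({L : Set (List A) | ∃ w : List A, L = {u | w ++ u ∈ lang o d v}}).Finite ↔
      ∃ (V' : Type) (_ : Finite V') (o' : V' → Bool) (d' : V' → A → V') (v' : V')
        (R : V → V' → Prop), isBisim o d o' d' R ∧ R v v' :=
  regular_iff_bisimilar_to_finite_general o d v
end
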